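/- Solvability of the recursion at the resonant level q+1 = 4: with G₋₂ = (2,−1,−1), G₋₁ = (−2(z₁+z₂), 2z₂, 2z₁), G₀ = (−z₁²+4z₁z₂−z₂², z₁(z₁−2z₂), z₂(z₂−2z₁)), G₁ = (0, 2(z₁−z₂)³, −2(z₁−z₂)³), G₂ = ((z₁−z₂)⁴, −(1/2)(z₁−z₂)⁴, −(1/2)(z₁−z₂)⁴), G₃ = ((3/5)(z₁−z₂)⁴(z₁+z₂), (1/5)(z₁−z₂)³(6z₁²−25z₁z₂+9z₂²), −(1/5)(z₁−z₂)³(9z₁²−25z₁z₂+6z₂²)), the vector 2·(T₀·G₃ + T₁·G₂ + T₂·G₁ + T₃·G₀ + T₄·G₋₁ + T₅·G₋₂) lies in the range of the (non-invertible) matrix (4·I₃ − 2T), i.e. in the span of the vectors (0,1,−1) and (2,−1,−1). -/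
import Mathlib


open Matrix

noncomputable def P1 : Matrix (Fin 3) (Fin 3) ℂ := !![0,1,0; 1,0,0; 0,0,1]
noncomputable def P2 : Matrix (Fin 3) (Fin 3) ℂ := !![0,0,1; 0,1,0; 1,0,0]
noncomputable def T : Matrix (Fin 3) (Fin 3) ℂ := P1 + P2

/-- T_r = z₁^{r+1}·P₁ + z₂^{r+1}·P₂. -/
noncomputable def Tr (z₁ z₂ : ℂ) (r : ℕ) : Matrix (Fin 3) (Fin 3) ℂ :=
  z₁^(r+1) • P1 + z₂^(r+1) • P2

noncomputable def Gm2 : Fin 3 → ℂ := ![2, -1, -1]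
noncomputable def Gm1 (z₁ z₂ : ℂ) : Fin 3 → ℂ := ![-2*(z₁ + z₂), 2*z₂, 2*z₁]
noncomputable def G0 (z₁ z₂ : ℂ) : Fin 3 → ℂ :=
  ![-z₁^2 + 4*z₁*z₂ - z₂^2, z₁*(z₁ - 2*z₂), z₂*(z₂ - 2*z₁)]
noncomputable def G1 (z₁ z₂ : ℂ) : Fin 3 → ℂ :=
  ![0, 2*(z₁ - z₂)^3, -2*(z₁ - z₂)^3]
noncomputable def G2 (z₁ z₂ : ℂ) : Fin 3 → ℂ :=
  ![(z₁ - z₂)^4, -(1/2)*(z₁ - z₂)^4, -(1/2)*(z₁ - z₂)^4]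
noncomputable def G3 (z₁ z₂ : ℂ) : Fin 3 → ℂ :=
  ![(3/5)*(z₁ - z₂)^4*(z₁ + z₂),
    (1/5)*(z₁ - z₂)^3*(6*z₁^2 - 25*z₁*z₂ + 9*z₂^2),
    -(1/5)*(z₁ - z₂)^3*(9*z₁^2 - 25*z₁*z₂ + 6*z₂^2)]

/-- The right-hand side of the recursion at level q+1 = 4. -/
noncomputable def rhs4 (z₁ z₂ : ℂ) : Fin 3 → ℂ :=
  (2 : ℂ) • (Tr z₁ z₂ 0 *ᵥ G3 z₁ z₂ + Tr z₁ z₂ 1 *ᵥ G2 z₁ z₂ +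
    Tr z₁ z₂ 2 *ᵥ G1 z₁ z₂ + Tr z₁ z₂ 3 *ᵥ G0 z₁ z₂ +
    Tr z₁ z₂ 4 *ᵥ Gm1 z₁ z₂ + Tr z₁ z₂ 5 *ᵥ Gm2)

theorem resonant_level_four (z₁ z₂ : ℂ) (hz : z₁ ≠ z₂) :
    (∃ x : Fin 3 → ℂ,
      ((4 : ℂ) • (1 : Matrix (Fin 3) (Fin 3) ℂ) - (2 : ℂ) • T) *ᵥ x =
        rhs4 z₁ z₂) ∧
    rhs4 z₁ z₂ ∈
      Submodule.span ℂ ({![0, 1, -1], ![2, -1, -1]} : Set (Fin 3 → ℂ)) := by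

  set a : ℂ := rhs4 z₁ z₂ 1 + rhs4 z₁ z₂ 0 / 2 with ha
  set b : ℂ := rhs4 z₁ z₂ 0 / 2 with hb
  have hsum : rhs4 z₁ z₂ 0 + rhs4 z₁ z₂ 1 + rhs4 z₁ z₂ 2 = 0 := by
    simp only [rhs4, Tr, P1, P2, G3, G2, G1, G0, Gm1, Gm2, Matrix.mulVec,
      dotProduct, Fin.sum_univ_three, Matrix.cons_val_zero,
      Matrix.cons_val_one, Matrix.head_cons, Matrix.cons_val_two,
      Matrix.tail_cons, Matrix.add_apply, Matrix.smul_apply,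
      Matrix.of_apply, Pi.add_apply, Pi.smul_apply, smul_eq_mul]
    ring
  have key : rhs4 z₁ z₂ = a • ![0, 1, -1] + b • ![2, -1, -1] := by
    funext i
    fin_cases i
    · show rhs4 z₁ z₂ 0 = a * 0 + b * 2
      rw [ha, hb]; ring
    · show rhs4 z₁ z₂ 1 = a * 1 + b * (-1)
      rw [ha, hb]; ring
    · show rhs4 z₁ z₂ 2 = a * (-1) + b * (-1)
      rw [ha, hb]
      linear_combination hsum
  constructor
  · refine ⟨![(a + b) / 2, a, 0], ?_⟩
    rw [key]
    funext i
    fin_cases i <;>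
      · simp only [T, P1, P2, Matrix.mulVec, dotProduct,
          Fin.sum_univ_three, Matrix.sub_apply, Matrix.smul_apply,
          Matrix.add_apply, Matrix.one_apply, Matrix.of_apply,
          Matrix.cons_val_zero, Matrix.cons_val_one, Matrix.head_cons,
          Matrix.cons_val_two, Matrix.tail_cons, Pi.add_apply,
          Pi.smul_apply, smul_eq_mul]
        norm_num [Fin.ext_iff]
        ring
  · rw [key]
    exact Submodule.add_mem _
      (Submodule.smul_mem _ _ (Submodule.subset_span (Or.inl rfl)))
      (Submodule.smul_mem _ _ (Submodule.subset_span (Or.inr rfl)))
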